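/- Let γ ≥ 1, P⁻ > 0 and s ∈ (0, 2c_s(P⁻)). For ε ∈ (0, P⁻) set P⁺ = P⁻ − ε, A(ε) = √(P⁻P⁺)·√(((P⁻)^γ − (P⁺)^γ)/ε), J⁻ = sP⁻ − A(ε), J⁺ = J⁻ + s(P⁺ − P⁻), u⁻ = J⁻/P⁻ and u⁺ = J⁺/P⁺. Then there exists ε₀ > 0 such that for every ε ∈ (0, ε₀) both end states are subsonic, i.e. |u⁻| < c_s(P⁻) and |u⁺| < c_s(P⁺). -/

import Mathlib

/-!
The difference quotient in `A(ε)` is a backward slope of `ρ ↦ ρ^γ` at `P⁻`, so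
`A(ε) → P⁻ c` with `c = c_s(P⁻)`. Since `u⁻ = s - A/P⁻` and `u⁺ = s - A/P⁺`, both velocities
tend to `s - c`, while `c_s(P⁺) → c`. The hypothesis `0 < s < 2c` is exactly `|s - c| < c`,
and strict inequalities persist for small `ε`.
-/

open Filter Topology

theorem HasDerivAt.tendsto_backward_slope_zero_right {f : ℝ → ℝ} {f' x : ℝ}
    (h : HasDerivAt f f' x) :
    Tendsto (fun ε => (f x - f (x - ε)) / ε) (𝓝[>] 0) (𝓝 f') := by
  have hneg : Tendsto Neg.neg (𝓝[>] (0 : ℝ)) (𝓝[<] 0) := by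
    simpa using tendsto_neg_nhdsGT_neg (a := (0 : ℝ))
  refine (h.tendsto_slope_zero_left.comp hneg).congr fun ε => ?_
  simp only [Function.comp_apply, smul_eq_mul, ← sub_eq_add_neg, inv_neg]
  ring

theorem Real.tendsto_rpow_backward_slope_zero_right {x p : ℝ} (h : x ≠ 0 ∨ 1 ≤ p) :
    Tendsto (fun ε => (x ^ p - (x - ε) ^ p) / ε) (𝓝[>] 0) (𝓝 (p * x ^ (p - 1))) :=
  (Real.hasDerivAt_rpow_const h).tendsto_backward_slope_zero_right

theorem tendsto_sub_nhdsGT_zero (x : ℝ) : Tendsto (fun ε => x - ε) (𝓝[>] 0) (𝓝 x) :=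
  ((continuous_sub_left x).tendsto' 0 x (sub_zero x)).mono_left nhdsWithin_le_nhds

theorem tendsto_shock_amplitude {γ Pm : ℝ} (hPm : 0 < Pm) :
    Tendsto (fun ε => Real.sqrt (Pm * (Pm - ε)) * Real.sqrt ((Pm ^ γ - (Pm - ε) ^ γ) / ε))
      (𝓝[>] 0) (𝓝 (Pm * Real.sqrt (γ * Pm ^ (γ - 1)))) := by
  have hroot : Tendsto (fun ε => Real.sqrt (Pm * (Pm - ε))) (𝓝[>] 0) (𝓝 Pm) := by
    simpa [Real.sqrt_mul_self hPm.le] using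
      ((tendsto_const_nhds (x := Pm)).mul (tendsto_sub_nhdsGT_zero Pm)).sqrt
  exact hroot.mul (Real.tendsto_rpow_backward_slope_zero_right (Or.inl hPm.ne')).sqrt

theorem tendsto_sound_speed_sub {γ Pm : ℝ} (hPm : 0 < Pm) :
    Tendsto (fun ε => Real.sqrt (γ * (Pm - ε) ^ (γ - 1))) (𝓝[>] 0)
      (𝓝 (Real.sqrt (γ * Pm ^ (γ - 1)))) :=
  (tendsto_const_nhds.mul ((Real.continuousAt_rpow_const Pm (γ - 1)
    (Or.inl hPm.ne')).tendsto.comp (tendsto_sub_nhdsGT_zero Pm))).sqrt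

theorem eventually_subsonic_end_states {γ Pm s : ℝ} (hPm : 0 < Pm) (hs : 0 < s)
    (hs' : s < 2 * Real.sqrt (γ * Pm ^ (γ - 1))) :
    ∀ᶠ ε in 𝓝[>] 0,
      |s - Real.sqrt (Pm * (Pm - ε)) * Real.sqrt ((Pm ^ γ - (Pm - ε) ^ γ) / ε) / Pm|
          < Real.sqrt (γ * Pm ^ (γ - 1)) ∧
      |s - Real.sqrt (Pm * (Pm - ε)) * Real.sqrt ((Pm ^ γ - (Pm - ε) ^ γ) / ε) / (Pm - ε)|
          < Real.sqrt (γ * (Pm - ε) ^ (γ - 1)) := by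
  set c := Real.sqrt (γ * Pm ^ (γ - 1))
  have hlimit : |s - c| < c := abs_lt.mpr ⟨by linarith, by linarith⟩
  have hA := tendsto_shock_amplitude (γ := γ) hPm
  have hc : Pm * c / Pm = c := by field_simp
  have hminus := ((tendsto_const_nhds (x := s)).sub (hA.div_const Pm)).abs
  have hplus := ((tendsto_const_nhds (x := s)).sub (hA.div (tendsto_sub_nhdsGT_zero Pm)
    hPm.ne')).abs
  rw [hc] at hminus hplus
  exact (hminus.eventually_lt tendsto_const_nhds hlimit).and
    (hplus.eventually_lt (tendsto_sound_speed_sub hPm) hlimit)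

theorem statement_12_general (γ Pm s : ℝ) (hPm : 0 < Pm) (hs : 0 < s)
    (hs' : s < 2 * Real.sqrt (γ * Pm ^ (γ - 1))) :
    ∃ ε₀ > (0:ℝ), ∀ ε : ℝ, 0 < ε → ε < ε₀ → ε < Pm →
      ∀ A Jm Jp : ℝ,
        A = Real.sqrt (Pm * (Pm - ε)) * Real.sqrt ((Pm ^ γ - (Pm - ε) ^ γ) / ε) →
        Jm = s * Pm - A →
        Jp = Jm + s * ((Pm - ε) - Pm) →
        |Jm / Pm| < Real.sqrt (γ * Pm ^ (γ - 1)) ∧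
        |Jp / (Pm - ε)| < Real.sqrt (γ * (Pm - ε) ^ (γ - 1)) := by
  obtain ⟨ε₀, hε₀, hsubsonic⟩ :=
    (nhdsGT_basis 0).eventually_iff.mp (eventually_subsonic_end_states hPm hs hs')
  refine ⟨ε₀, hε₀, fun ε hε hεε₀ hεPm A Jm Jp hA hJm hJp => ?_⟩
  have hPp : Pm - ε ≠ 0 := by linarith
  have hum : Jm / Pm = s - A / Pm := by
    rw [hJm]; field_simp
  have hup : Jp / (Pm - ε) = s - A / (Pm - ε) := by
    rw [hJp, hJm]; field_simp; ring
  rw [hum, hup, hA]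
  exact hsubsonic ⟨hε, hεε₀⟩

/-- for `s ∈ (0, 2c_s(P⁻))` and sufficiently small amplitude, both end
states of the Lax 2-shock are subsonic: `|u⁻| < c_s(P⁻)` and `|u⁺| < c_s(P⁺)`. -/
theorem statement_12 (γ Pm s : ℝ) (hγ : 1 ≤ γ) (hPm : 0 < Pm) (hs : 0 < s)
    (hs' : s < 2 * Real.sqrt (γ * Pm ^ (γ - 1))) :
    ∃ ε₀ > (0:ℝ), ∀ ε : ℝ, 0 < ε → ε < ε₀ → ε < Pm →
      ∀ A Jm Jp : ℝ,
        A = Real.sqrt (Pm * (Pm - ε)) * Real.sqrt ((Pm ^ γ - (Pm - ε) ^ γ) / ε) →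
        Jm = s * Pm - A →
        Jp = Jm + s * ((Pm - ε) - Pm) →
        |Jm / Pm| < Real.sqrt (γ * Pm ^ (γ - 1)) ∧
        |Jp / (Pm - ε)| < Real.sqrt (γ * (Pm - ε) ^ (γ - 1)) :=
  statement_12_general γ Pm s hPm hs hs'
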